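/- For the right-handed trefoil knot, with F_1(λ,μ,Q) defined so that (∂_λ F_1)|_{(λ,Q)=(1,1)} = μ(μ-1)(μ²-μ+1) and (∂_Q F_1)|_{(λ,Q)=(1,1)} = μ(2-4μ+6μ²-3μ³), the expression (1-μ)·exp(∫ -(∂_Q F_1/∂_λ F_1)|_{(1,μ,1)} dp) with μ = e^p equals μ²(1-μ+μ²) up to a power of μ, which is the Alexander polynomial of the trefoil. -/

import Mathlib

/-!
With `μ = e^p`, the function is `log (P(μ) / Q(μ))` for the polynomials `P = X² Δ` and `Q = 1 - X`,
where `Δ = 1 - X + X²` is the Alexander polynomial of the trefoil. By the chain rule its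
`p`-derivative is `μ (P'(μ)/P(μ) - Q'(μ)/Q(μ))`, and since `Δ(μ) > 0` and `μ ≠ 1` for `p ≠ 0`,
what remains is a rational identity in `μ`.
-/

open Polynomial Real

theorem Polynomial.hasDerivAt_log_eval_exp_div_eval_exp {P Q : ℝ[X]} {p : ℝ}
    (hP : P.eval (exp p) ≠ 0) (hQ : Q.eval (exp p) ≠ 0) :
    HasDerivAt (fun q => log (P.eval (exp q) / Q.eval (exp q)))
      (exp p * (P.derivative.eval (exp p) / P.eval (exp p)
        - Q.derivative.eval (exp p) / Q.eval (exp p))) p := by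
  have hPexp := (P.hasDerivAt (exp p)).comp p (hasDerivAt_exp p)
  have hQexp := (Q.hasDerivAt (exp p)).comp p (hasDerivAt_exp p)
  refine ((hPexp.div hQexp hQ).log (div_ne_zero hP hQ)).congr_deriv ?_
  simp only [Function.comp_apply, Pi.div_apply]
  field_simp

noncomputable def trefoilAlexander : ℝ[X] := 1 - X + X ^ 2

theorem trefoilAlexander_eval (μ : ℝ) : trefoilAlexander.eval μ = 1 - μ + μ ^ 2 := by
  simp [trefoilAlexander]

theorem trefoilAlexander_eval_pos (μ : ℝ) : 0 < trefoilAlexander.eval μ := by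
  rw [trefoilAlexander_eval]
  nlinarith [sq_nonneg (μ - 1 / 2)]

theorem trefoilAlexander_log_deriv_eq {μ : ℝ} (hμ₀ : μ ≠ 0) (hμ₁ : μ ≠ 1) :
    μ * ((X ^ 2 * trefoilAlexander).derivative.eval μ / (X ^ 2 * trefoilAlexander).eval μ
        - (1 - X : ℝ[X]).derivative.eval μ / (1 - X : ℝ[X]).eval μ)
      = -((2 - 4 * μ + 6 * μ ^ 2 - 3 * μ ^ 3) / ((μ - 1) * (μ ^ 2 - μ + 1))) := by
  have hΔ : 1 - μ + μ ^ 2 ≠ 0 := (trefoilAlexander_eval μ ▸ trefoilAlexander_eval_pos μ).ne'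
  have hlin : 1 - μ ≠ 0 := sub_ne_zero.mpr hμ₁.symm
  rw [show (μ - 1) * (μ ^ 2 - μ + 1) = -((1 - μ) * (1 - μ + μ ^ 2)) by ring]
  simp only [trefoilAlexander, derivative_mul, derivative_X_pow, derivative_add, derivative_sub,
    derivative_one, derivative_X, eval_add, eval_sub, eval_mul, eval_pow, eval_X, eval_one,
    eval_zero, eval_natCast, map_natCast]
  field_simp
  ring

/-- Verification that the augmentation-variety formula recovers the Alexander polynomial of
the right-handed trefoil: with `μ = e^p` and
`f(μ) = (2 - 4μ + 6μ² - 3μ³)/((μ-1)(μ²-μ+1)) = (∂_Q F₁/∂_λ F₁)|_{(1,μ,1)}`,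
the logarithmic derivative identity
`d/dp [ log( (1-e^p)⁻¹ · e^{2p}(1 - e^p + e^{2p}) ) ] = -f(e^p)` holds; equivalently
`(1-μ)·exp(∫ -f(e^p) dp) = μ²(1-μ+μ²)` up to a multiplicative constant. -/
theorem trefoil_alexander_log_deriv (p : ℝ) (hp : p ≠ 0) :
    deriv (fun q : ℝ =>
        Real.log (Real.exp (2 * q) * (1 - Real.exp q + Real.exp (2 * q)) / (1 - Real.exp q))) p
      = -((2 - 4 * Real.exp p + 6 * Real.exp p ^ 2 - 3 * Real.exp p ^ 3) /
          ((Real.exp p - 1) * (Real.exp p ^ 2 - Real.exp p + 1))) := by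
  have hexp_sq (q : ℝ) : exp (2 * q) = exp q ^ 2 := by rw [two_mul, exp_add, sq]
  have hμ₁ : exp p ≠ 1 := by rwa [Ne, exp_eq_one_iff]
  have hfun : (fun q => log (exp (2 * q) * (1 - exp q + exp (2 * q)) / (1 - exp q)))
      = fun q => log ((X ^ 2 * trefoilAlexander).eval (exp q) / (1 - X : ℝ[X]).eval (exp q)) := by
    funext q
    simp [trefoilAlexander_eval, hexp_sq]
  have hP : (X ^ 2 * trefoilAlexander).eval (exp p) ≠ 0 := by
    rw [eval_mul, eval_pow, eval_X]
    exact mul_ne_zero (pow_ne_zero 2 (exp_ne_zero p)) (trefoilAlexander_eval_pos _).ne'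
  have hQ : (1 - X : ℝ[X]).eval (exp p) ≠ 0 := by
    simpa [sub_eq_zero] using hμ₁.symm
  rw [hfun, (hasDerivAt_log_eval_exp_div_eval_exp hP hQ).deriv]
  exact trefoilAlexander_log_deriv_eq (exp_ne_zero p) hμ₁
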